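/- arXiv:0901.4483 — 5 statements merged into one kernel-verified Lean document; each statement's English description precedes it below -/
import Mathlib

section
/- Let A be a Weil algebra with maximal ideal 𝔪_A, let I be a proper ideal of A, and let φ : A → A/I be the canonical projection. Then I ⊆ 𝔪_A² if and only if for every commutative ℝ-algebra C and every ℝ-algebra homomorphism p : C → A, surjectivity of φ ∘ p implies surjectivity of p. -/
open IsLocalRing

lemma weil_nilpotent (A : Type) [CommRing A] [Algebra ℝ A] [IsLocalRing A]
    [FiniteDimensional ℝ A] : IsNilpotent (maximalIdeal A) := by
  have h1 : IsArtinianRing A := IsArtinianRing.of_finite ℝ A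
  have h2 := IsArtinianRing.isNilpotent_jacobson_bot (R := A)
  rwa [IsLocalRing.jacobson_eq_maximalIdeal ⊥ bot_ne_top] at h2

lemma restrict_pow (A : Type) [CommRing A] [Algebra ℝ A] (J : Ideal A) :
    ∀ n : ℕ, ((J ^ (n + 1)).restrictScalars ℝ) = (J.restrictScalars ℝ) ^ (n + 1)
  | 0 => by simp
  | n + 1 => by
    rw [pow_succ, Submodule.restrictScalars_mul, restrict_pow A J n]; ring

lemma forward (A : Type) [CommRing A] [Algebra ℝ A] [IsLocalRing A] [FiniteDimensional ℝ A]
    (I : Ideal A) (hle : I ≤ (maximalIdeal A) ^ 2)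
    (C : Type) [CommRing C] [Algebra ℝ C] (p : C →ₐ[ℝ] A)
    (hs : Function.Surjective ((Ideal.Quotient.mkₐ ℝ I).comp p)) :
    Function.Surjective p := by
  obtain ⟨n, hn⟩ := weil_nilpotent A
  set R' : Submodule ℝ A := Subalgebra.toSubmodule p.range with hR'def
  set M : Submodule ℝ A := (maximalIdeal A).restrictScalars ℝ with hMdef
  set T : Submodule ℝ A := R' ⊓ M with hTdef
  have hTR : T ≤ R' := inf_le_left
  have hTM : T ≤ M := inf_le_right
  have hRR : R' * R' ≤ R' := by
    rw [Submodule.mul_le]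
    intro a ha b hb
    exact Subalgebra.mul_mem _ ha hb
  have hMM : M * M ≤ M := by
    rw [Submodule.mul_le]
    intro a ha b hb
    exact Ideal.mul_mem_left _ a hb
  have hMpow : ∀ k : ℕ, M ^ (k + 2) ≤ M ^ (k + 1) := by
    intro k
    induction k with
    | zero => rw [pow_one, pow_two]; exact hMM
    | succ k ih =>
      rw [pow_succ, pow_succ (n := k + 1)]
      exact mul_le_mul' ih le_rfl
  have hT_in_M : ∀ k : ℕ, T ^ (k + 1) ≤ M ^ (k + 1) := by
    intro k
    induction k with
    | zero => simpa using hTM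
    | succ k ih =>
      rw [pow_succ, pow_succ]
      exact mul_le_mul' ih hTM
  have hTpowR : ∀ k : ℕ, T ^ (k + 1) ≤ R' := by
    intro k
    induction k with
    | zero => simpa using hTR
    | succ k ih =>
      rw [pow_succ]
      exact le_trans (mul_le_mul' ih hTR) hRR
  have hpow_eq : ∀ m : ℕ, ((maximalIdeal A ^ (m + 1)).restrictScalars ℝ) = M ^ (m + 1) := by
    intro m; rw [hMdef]; exact restrict_pow A _ m
  have hbase : ∀ a : A, ∃ r, r ∈ p.range ∧ a - r ∈ M ^ 2 := by
    intro a
    obtain ⟨c, hc⟩ := hs (Ideal.Quotient.mkₐ ℝ I a)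
    refine ⟨p c, ⟨c, rfl⟩, ?_⟩
    have h1 : a - p c ∈ I := by
      rw [← Ideal.Quotient.eq]
      simpa [Ideal.Quotient.mkₐ_eq_mk] using hc.symm
    have h2 : a - p c ∈ (maximalIdeal A) ^ 2 := hle h1
    have := hpow_eq 1
    rw [← this]
    exact h2
  have hMT2 : M ≤ T ⊔ M ^ 2 := by
    intro x hx
    obtain ⟨r, hr, hd⟩ := hbase x
    have hdM : x - r ∈ M := by simpa using hMpow 0 (by simpa using hd)
    have hrM : r ∈ M := by
      have : r = x - (x - r) := by ring
      rw [this]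
      exact Submodule.sub_mem _ hx hdM
    exact Submodule.mem_sup.mpr ⟨r, ⟨(Subalgebra.mem_toSubmodule _).mpr hr, hrM⟩, x - r, hd, by ring⟩
  have hQ : ∀ k : ℕ, M ^ (k + 1) ≤ T ^ (k + 1) ⊔ M ^ (k + 2) := by
    intro k
    induction k with
    | zero => simpa using hMT2
    | succ k ih =>
      calc M ^ (k + 2) = M ^ (k + 1) * M := pow_succ M (k + 1)
        _ ≤ (T ^ (k + 1) ⊔ M ^ (k + 2)) * (T ⊔ M ^ 2) := mul_le_mul' ih hMT2
        _ = T ^ (k + 1) * T ⊔ T ^ (k + 1) * M ^ 2 ⊔ (M ^ (k + 2) * T ⊔ M ^ (k + 2) * M ^ 2) := by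
            rw [Submodule.sup_mul, Submodule.mul_sup, Submodule.mul_sup]
        _ ≤ T ^ (k + 2) ⊔ M ^ (k + 3) := by
            refine sup_le (sup_le ?_ ?_) (sup_le ?_ ?_)
            · rw [← pow_succ]; exact le_sup_left
            · refine le_trans ?_ le_sup_right
              calc T ^ (k + 1) * M ^ 2 ≤ M ^ (k + 1) * M ^ 2 :=
                    mul_le_mul' (hT_in_M k) le_rfl
                _ = M ^ (k + 3) := by rw [← pow_add]
            · refine le_trans ?_ le_sup_right
              calc M ^ (k + 2) * T ≤ M ^ (k + 2) * M := mul_le_mul' le_rfl hTM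
                _ = M ^ (k + 3) := (pow_succ _ _).symm
            · refine le_trans ?_ le_sup_right
              calc M ^ (k + 2) * M ^ 2 = M ^ (k + 4) := by rw [← pow_add]
                _ ≤ M ^ (k + 3) := hMpow (k + 2)
  have hchain : ∀ k : ℕ, M ^ 2 ≤ R' ⊔ M ^ (k + 2) := by
    intro k
    induction k with
    | zero => exact le_sup_right
    | succ k ih =>
      refine le_trans ih (sup_le le_sup_left ?_)
      refine le_trans (hQ (k + 1)) (sup_le ?_ le_sup_right)
      exact le_trans (hTpowR (k + 1)) le_sup_left
  have hMzero : M ^ (n + 2) = ⊥ := by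
    have h0 : (maximalIdeal A) ^ (n + 2) = ⊥ :=
      le_bot_iff.mp (le_trans (Ideal.pow_le_pow_right (by omega)) (le_of_eq hn))
    rw [← hpow_eq (n + 1), h0]
    rfl
  intro a
  obtain ⟨r, hr, hd⟩ := hbase a
  have h1 : a - r ∈ R' ⊔ M ^ (n + 2) := (hchain n) hd
  rw [hMzero, sup_bot_eq] at h1
  have haR : a ∈ R' := by
    have : a = (a - r) + r := by ring
    rw [this]
    exact Submodule.add_mem _ h1 ((Subalgebra.mem_toSubmodule _).mpr hr)
  exact (Subalgebra.mem_toSubmodule _).mp haR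

lemma backward (A : Type) [CommRing A] [Algebra ℝ A] [IsLocalRing A] [FiniteDimensional ℝ A]
    (I : Ideal A) (hI : I ≠ ⊤)
    (h : ∀ (C : Type) [CommRing C] [Algebra ℝ C] (p : C →ₐ[ℝ] A),
        Function.Surjective ((Ideal.Quotient.mkₐ ℝ I).comp p) → Function.Surjective p) :
    I ≤ (maximalIdeal A) ^ 2 := by
  intro x hx
  by_contra hx2
  have hxm : x ∈ maximalIdeal A := le_maximalIdeal hI hx
  letI : Field (A ⧸ maximalIdeal A) := Ideal.Quotient.field _
  let π : A →ₐ[ℝ] A ⧸ maximalIdeal A := Ideal.Quotient.mkₐ ℝ (maximalIdeal A)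
  letI : Module.Finite ℝ (A ⧸ maximalIdeal A) :=
    Module.Finite.of_surjective π.toLinearMap (Ideal.Quotient.mkₐ_surjective ℝ _)
  letI : Algebra.FormallyEtale ℝ (A ⧸ maximalIdeal A) :=
    Algebra.FormallyEtale.of_isSeparable ℝ (A ⧸ maximalIdeal A)
  let σ : (A ⧸ maximalIdeal A) →ₐ[ℝ] A :=
    Algebra.FormallySmooth.lift (maximalIdeal A) (weil_nilpotent A)
      (AlgHom.id ℝ (A ⧸ maximalIdeal A))
  have hσ : ∀ y, π (σ y) = y := fun y =>
    Algebra.FormallySmooth.mk_lift _ _ _ y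
  have hmem : ∀ a : A, a - σ (π a) ∈ maximalIdeal A := by
    intro a
    rw [← Ideal.Quotient.eq_zero_iff_mem]
    show π (a - σ (π a)) = 0
    rw [map_sub, hσ, sub_self]
  let f : A → CotangentSpace A := fun a =>
    (maximalIdeal A).toCotangent ⟨a - σ (π a), hmem a⟩
  have hsmul : ∀ (a : A) (t : CotangentSpace A), π a • t = a • t := by
    intro a t
    have : π a = algebraMap A (A ⧸ maximalIdeal A) a := rfl
    rw [this, algebraMap_smul]
  have hf_add : ∀ a b : A, f (a + b) = f a + f b := by
    intro a b
    show (maximalIdeal A).toCotangent _ = _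
    rw [← map_add]
    congr 1
    apply Subtype.ext
    show (a + b) - σ (π (a + b)) = (a - σ (π a)) + (b - σ (π b))
    rw [map_add, map_add]; ring
  have hf_mul : ∀ a b : A, f (a * b) = π a • f b + π b • f a := by
    intro a b
    have e1 : (⟨a * b - σ (π (a * b)), hmem (a * b)⟩ : ↥(maximalIdeal A))
        = a • (⟨b - σ (π b), hmem b⟩ : ↥(maximalIdeal A))
          + σ (π b) • (⟨a - σ (π a), hmem a⟩ : ↥(maximalIdeal A)) := by
      apply Subtype.ext
      show a * b - σ (π (a * b))
          = a • (b - σ (π b)) + σ (π b) • (a - σ (π a))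
      simp only [smul_eq_mul, map_mul]
      ring
    show (maximalIdeal A).toCotangent _ = _
    rw [e1, map_add, map_smul, map_smul,
      ← hsmul a ((maximalIdeal A).toCotangent ⟨b - σ (π b), hmem b⟩),
      ← hsmul (σ (π b)) ((maximalIdeal A).toCotangent ⟨a - σ (π a), hmem a⟩),
      hσ]
  have hf_one : f 1 = 0 := by
    show (maximalIdeal A).toCotangent _ = 0
    have e0 : (⟨(1 : A) - σ (π 1), hmem 1⟩ : ↥(maximalIdeal A)) = 0 := by
      apply Subtype.ext; simp
    rw [e0, map_zero]
  have hf_smul : ∀ (r : ℝ) (a : A), f (r • a) = (algebraMap ℝ A r) • f a := by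
    intro r a
    show (maximalIdeal A).toCotangent _ = _
    rw [← map_smul]
    congr 1
    apply Subtype.ext
    show r • a - σ (π (r • a)) = algebraMap ℝ A r • (a - σ (π a))
    rw [map_smul, map_smul, algebraMap_smul, smul_sub]
  let xbar : CotangentSpace A := (maximalIdeal A).toCotangent ⟨x, hxm⟩
  have hxbar : xbar ≠ 0 := fun h0 => hx2 ((Ideal.toCotangent_eq_zero _ _).mp h0)
  obtain ⟨W, hW⟩ :=
    Submodule.exists_isCompl (Submodule.span (A ⧸ maximalIdeal A) {xbar})
  let S : Submodule ℝ A :=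
    { carrier := {a | f a ∈ W}
      add_mem' := fun ha hb => by
        show f _ ∈ W
        rw [hf_add]
        exact W.add_mem ha hb
      zero_mem' := by
        show f 0 ∈ W
        have h0 : f 0 = 0 := by
          show (maximalIdeal A).toCotangent _ = 0
          have e0 : (⟨(0 : A) - σ (π 0), hmem 0⟩ : ↥(maximalIdeal A)) = 0 := by
            apply Subtype.ext; simp
          rw [e0, map_zero]
        rw [h0]; exact W.zero_mem
      smul_mem' := fun r a ha => by
        show f (r • a) ∈ W
        rw [hf_smul, ← hsmul]
        exact W.smul_mem _ ha }
  let B : Subalgebra ℝ A := S.toSubalgebra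
    (by show f 1 ∈ W; rw [hf_one]; exact W.zero_mem)
    (fun a b ha hb => by
      show f (a * b) ∈ W
      rw [hf_mul]
      exact W.add_mem (W.smul_mem _ hb) (W.smul_mem _ ha))
  have hres_x : π x = 0 := Ideal.Quotient.eq_zero_iff_mem.mpr hxm
  have hfx2 : f x = xbar := by
    show (maximalIdeal A).toCotangent _ = _
    congr 1
    apply Subtype.ext
    show x - σ (π x) = x
    rw [hres_x, map_zero, sub_zero]
  have hsurj : Function.Surjective ((Ideal.Quotient.mkₐ ℝ I).comp B.val) := by
    intro q
    obtain ⟨a, rfl⟩ := Ideal.Quotient.mkₐ_surjective ℝ I q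
    have hmem_top : f a ∈ (Submodule.span (A ⧸ maximalIdeal A) {xbar}) ⊔ W := by
      rw [hW.sup_eq_top]; trivial
    obtain ⟨s, hs, w, hw, hsw⟩ := Submodule.mem_sup.mp hmem_top
    obtain ⟨c, rfl⟩ := Submodule.mem_span_singleton.mp hs
    have hfsx : f (σ c * x) = c • xbar := by
      have hres : π (σ c * x) = 0 := by rw [map_mul, hres_x, mul_zero]
      show (maximalIdeal A).toCotangent _ = _
      have e2 : (⟨σ c * x - σ (π (σ c * x)), hmem (σ c * x)⟩ : ↥(maximalIdeal A))
          = σ c • (⟨x, hxm⟩ : ↥(maximalIdeal A)) := by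
        apply Subtype.ext
        show σ c * x - σ (π (σ c * x)) = σ c • x
        rw [hres, map_zero, sub_zero, smul_eq_mul]
      rw [e2, map_smul, ← hsmul (σ c) xbar, hσ]
    have hfsub : f (a - σ c * x) = f a - f (σ c * x) := by
      have h2 := hf_add (a - σ c * x) (σ c * x)
      rw [sub_add_cancel] at h2
      rw [h2, add_sub_cancel_right]
    refine ⟨⟨a - σ c * x, ?_⟩, ?_⟩
    · show f (a - σ c * x) ∈ W
      rw [hfsub, hfsx, ← hsw]
      simpa using hw
    · show Ideal.Quotient.mkₐ ℝ I (a - σ c * x) = Ideal.Quotient.mkₐ ℝ I a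
      rw [map_sub]
      have h3 : Ideal.Quotient.mkₐ ℝ I (σ c * x) = 0 :=
        Ideal.Quotient.eq_zero_iff_mem.mpr (Ideal.mul_mem_left I _ hx)
      rw [h3, sub_zero]
  have hval := h ↥B B.val hsurj
  obtain ⟨⟨b, hb⟩, hbx⟩ := hval x
  have hbx' : b = x := hbx
  rw [hbx'] at hb
  have hxS : f x ∈ W := hb
  rw [hfx2] at hxS
  have hmem2 : xbar ∈ (Submodule.span (A ⧸ maximalIdeal A) {xbar}) ⊓ W :=
    ⟨Submodule.mem_span_singleton_self _, hxS⟩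
  rw [hW.inf_eq_bot] at hmem2
  exact hxbar hmem2


/-- Let `A` be a Weil algebra with maximal ideal `𝔪_A`, `I` a
proper ideal of `A` and `φ : A → A/I` the canonical projection.  Then
`I ⊆ 𝔪_A²` if and only if for every commutative ℝ-algebra `C` and every
ℝ-algebra homomorphism `p : C → A`, surjectivity of `φ ∘ p` implies
surjectivity of `p`. -/
theorem le_maximalIdeal_sq_iff_regular
    (A : Type) [CommRing A] [Algebra ℝ A] [IsLocalRing A] [FiniteDimensional ℝ A]
    (I : Ideal A) (hI : I ≠ ⊤) :
    I ≤ (maximalIdeal A) ^ 2 ↔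
      ∀ (C : Type) [CommRing C] [Algebra ℝ C] (p : C →ₐ[ℝ] A),
        Function.Surjective ((Ideal.Quotient.mkₐ ℝ I).comp p) →
          Function.Surjective p := by
  constructor
  · intro hle C _ _ p hs
    exact forward A I hle C p hs
  · intro h
    exact backward A I hI h
end

section
/- Let A be a commutative ℝ-algebra and I an ideal of A with I ⊆ Ann(I)², where Ann(I) = {a ∈ A : a·b = 0 for all b ∈ I}. Then every ℝ-derivation D : A → A taking values in I vanishes on I, i.e. D(b) = 0 for all b ∈ I. -/
/-- Let `A` be a commutative ℝ-algebra and `I` an ideal of `A`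
with `I ⊆ Ann(I)²`.  Then every ℝ-derivation `D : A → A` taking values in `I`
vanishes on `I`. -/
theorem derivation_vanishes_of_le_annihilator_sq
    (A : Type*) [CommRing A] [Algebra ℝ A]
    (I : Ideal A) (hI : I ≤ I.annihilator ^ 2)
    (D : Derivation ℝ A A) (hD : ∀ a : A, D a ∈ I) :
    ∀ b ∈ I, D b = 0 := by
  intro b hb
  have hb2 : b ∈ I.annihilator * I.annihilator := by
    have := hI hb; rwa [pow_two] at this
  refine Submodule.mul_induction_on hb2 ?_ ?_
  · intro x hx y hy
    have hx' : x • D y = 0 := (Submodule.mem_annihilator.mp hx) _ (hD y)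
    have hy' : y • D x = 0 := (Submodule.mem_annihilator.mp hy) _ (hD x)
    rw [Derivation.leibniz, hx', hy', add_zero]
  · intro x y hx hy
    rw [map_add, hx, hy, add_zero]
end

section
/- Let A be a Weil algebra and I an ideal of A with I ⊆ Ann(I)², where Ann(I) = {a ∈ A : a·b = 0 for all b ∈ I}. Then every ℝ-algebra automorphism σ of A satisfying σ(a) − a ∈ I for all a ∈ A fixes I pointwise: σ(b) = b for all b ∈ I. -/
/-- Let `A` be a Weil algebra and `I` an ideal of `A` with
`I ⊆ Ann(I)²`.  Then every ℝ-algebra automorphism `σ` of `A` satisfying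
`σ a - a ∈ I` for all `a : A` fixes `I` pointwise.  (The affine sequence
associated to `I` is exact on the left side.) -/
theorem automorphism_fixes_of_le_annihilator_sq
    (A : Type*) [CommRing A] [Algebra ℝ A] [IsLocalRing A] [FiniteDimensional ℝ A]
    (I : Ideal A) (hI : I ≤ I.annihilator ^ 2)
    (σ : A ≃ₐ[ℝ] A) (hσ : ∀ a : A, σ a - a ∈ I) :
    ∀ b ∈ I, σ b = b := by
  intro b hb
  have hb2 : b ∈ I.annihilator * I.annihilator := by
    have := hI hb; rwa [sq] at this
  refine Submodule.mul_induction_on hb2 ?_ ?_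
  · intro x hx y hy
    have hx' : ∀ n ∈ I, x * n = 0 := fun n hn => Submodule.mem_annihilator.mp hx n hn
    have hy' : ∀ n ∈ I, y * n = 0 := fun n hn => Submodule.mem_annihilator.mp hy n hn
    have hi : σ x - x ∈ I := hσ x
    have hj : σ y - y ∈ I := hσ y
    have hiann : σ x - x ∈ I.annihilator := by
      have := hI hi
      exact (Ideal.pow_le_self (n := 2) two_ne_zero) this
    have h1 : x * (σ y - y) = 0 := hx' _ hj
    have h2 : y * (σ x - x) = 0 := hy' _ hi
    have h3 : (σ x - x) * (σ y - y) = 0 :=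
      Submodule.mem_annihilator.mp hiann _ hj
    have : σ (x * y) = σ x * σ y := map_mul σ x y
    rw [this]
    have hexp : σ x * σ y = x * y + x * (σ y - y) + y * (σ x - x) + (σ x - x) * (σ y - y) := by
      ring
    rw [hexp, h1, h2, h3]; ring
  · intro a c ha hc
    rw [map_add, ha, hc]
end

section
/- Let A be a Weil algebra with maximal ideal 𝔪_A, and let I be an ideal of A with I ⊆ Ann(I) ∩ 𝔪_A² which is invariant, i.e. σ(I) = I for every ℝ-algebra automorphism σ of A. Then for any two ℝ-algebra automorphisms σ, σ' of A with σ(a) − σ'(a) ∈ I for all a ∈ A, there exists a unique ℝ-derivation D : A → A taking values in I such that σ'(a) = σ(a) + σ(D(a)) for all a ∈ A. -/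
open IsLocalRing

/-- Let `A` be a Weil algebra with maximal ideal `𝔪_A` and
`I` an invariant ideal of `A` with `I ⊆ Ann(I) ∩ 𝔪_A²`.  Then for any two
ℝ-algebra automorphisms `σ, σ'` of `A` with `σ a - σ' a ∈ I` for all `a`,
there is a unique ℝ-derivation `D : A → A` with values in `I` such that
`σ' = σ ⊕ D`, i.e. `σ' a = σ a + σ (D a)` for all `a`. -/
theorem affine_structure_on_automorphisms
    (A : Type*) [CommRing A] [Algebra ℝ A] [IsLocalRing A] [FiniteDimensional ℝ A]
    (I : Ideal A) (hI : I ≤ I.annihilator ⊓ (maximalIdeal A) ^ 2)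
    (hinv : ∀ σ : A ≃ₐ[ℝ] A, σ '' (I : Set A) = I)
    (σ σ' : A ≃ₐ[ℝ] A) (h : ∀ a : A, σ a - σ' a ∈ I) :
    ∃! D : Derivation ℝ A A,
      (∀ a : A, D a ∈ I) ∧ ∀ a : A, σ' a = σ a + σ (D a) := by
  have hIann : ∀ x ∈ I, ∀ y ∈ I, x * y = 0 := by
    intro x hx y hy
    have hx' := (hI hx).1
    simpa [smul_eq_mul] using Submodule.mem_annihilator.mp hx' y hy
  have hmemsymm : ∀ x ∈ I, σ.symm x ∈ I := by
    intro x hx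
    have h2 := hinv (σ.symm : A ≃ₐ[ℝ] A)
    have h3 : σ.symm x ∈ ⇑σ.symm '' (I : Set A) := Set.mem_image_of_mem _ hx
    rw [h2] at h3
    exact h3
  have hDmem : ∀ a : A, σ.symm (σ' a) - a ∈ I := by
    intro a
    have heq : σ.symm (σ' a) - a = σ.symm (σ' a - σ a) := by simp [map_sub]
    rw [heq]
    exact hmemsymm _ (by simpa using I.neg_mem (h a))
  refine ⟨⟨(σ.symm.toLinearMap.comp (AlgEquiv.toLinearMap σ')) - LinearMap.id, by simp, ?_⟩,
    ⟨?_, ?_⟩, ?_⟩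
  · intro a b
    have hz := hIann _ (hDmem a) _ (hDmem b)
    simp only [LinearMap.sub_apply, LinearMap.coe_comp, Function.comp_apply,
      AlgEquiv.toLinearMap_apply, LinearMap.id_apply, smul_eq_mul, map_mul]
    linear_combination hz
  · intro a
    simpa using hDmem a
  · intro a
    simp only [Derivation.mk_coe, LinearMap.sub_apply, LinearMap.coe_comp,
      Function.comp_apply, AlgEquiv.toLinearMap_apply, LinearMap.id_apply, map_sub]
    simp
  · intro D' ⟨_, hD2⟩
    ext a
    have h2 := hD2 a
    have h3 : σ.symm (σ' a) = a + D' a := by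
      rw [h2, ← map_add]
      simp
    simp only [Derivation.mk_coe, LinearMap.sub_apply, LinearMap.coe_comp,
      Function.comp_apply, AlgEquiv.toLinearMap_apply, LinearMap.id_apply, h3]
    ring
end

section
/- Let m ≥ 1 and l > k ≥ 0 be natural numbers, and let A = ℝ^l_m be the truncated polynomial algebra, i.e. the quotient of the polynomial ring ℝ[ξ₁,…,ξ_m] by the (l+1)-st power of the ideal generated by the variables, with maximal ideal 𝔪_A generated by the classes of the variables. Then the annihilator ideal of 𝔪_A^{k+1} in A equals 𝔪_A^{l−k}: Ann(𝔪_A^{k+1}) = 𝔪_A^{l−k}. -/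
noncomputable section

/-- The ideal of `ℝ[ξ₁,…,ξ_m]` generated by the variables. -/
def varIdeal (m : ℕ) : Ideal (MvPolynomial (Fin m) ℝ) :=
  Ideal.span (Set.range MvPolynomial.X)

/-- The truncated polynomial algebra `ℝ^l_m = ℝ[ξ₁,…,ξ_m]/𝔪^{l+1}`. -/
abbrev TruncPolyAlg (m l : ℕ) : Type :=
  MvPolynomial (Fin m) ℝ ⧸ (varIdeal m) ^ (l + 1)

/-- The maximal ideal of `ℝ^l_m`, the image of the ideal of variables. -/
def truncMaxIdeal (m l : ℕ) : Ideal (TruncPolyAlg m l) :=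
  (varIdeal m).map (Ideal.Quotient.mk ((varIdeal m) ^ (l + 1)))

/-!
If `𝔪^{l+1} = 0` then `𝔪^{l-k}` kills `𝔪^{k+1}`, which gives one inclusion. Conversely, if `f`
kills `𝔪^{k+1}` then in particular `f · ξ₁^{k+1}` has all monomials of degree `≥ l + 1`; since
multiplying by `ξ₁^{k+1}` shifts monomials injectively and raises their degree by exactly
`k + 1`, every monomial of `f` has degree `≥ l - k`.
-/

theorem Ideal.pow_le_annihilator_pow {A : Type*} [CommSemiring A] {𝔪 : Ideal A} {n a b : ℕ}
    (h𝔪 : 𝔪 ^ n = ⊥) (hab : n ≤ a + b) : 𝔪 ^ a ≤ (𝔪 ^ b).annihilator := by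
  rw [Submodule.le_annihilator_iff, smul_eq_mul, ← pow_add, eq_bot_iff, ← h𝔪]
  exact Ideal.pow_le_pow_right hab

namespace MvPolynomial

theorem mem_pow_idealOfVars_of_mul_X_pow_mem {σ R : Type*} [CommSemiring R]
    {f : MvPolynomial σ R} {i : σ} {n a : ℕ} (h : f * X i ^ a ∈ idealOfVars σ R ^ n) :
    f ∈ idealOfVars σ R ^ (n - a) := by
  classical
  rw [mem_pow_idealOfVars_iff'] at h ⊢
  intro d hd
  have hshift : (d + Finsupp.single i a).degree < n := by
    rw [map_add, Finsupp.degree_single]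
    omega
  simpa [X_pow_eq_monomial, coeff_mul_monomial] using h _ hshift

end MvPolynomial

open MvPolynomial

theorem truncMaxIdeal_pow (m l j : ℕ) :
    truncMaxIdeal m l ^ j =
      (idealOfVars (Fin m) ℝ ^ j).map (Ideal.Quotient.mk (idealOfVars (Fin m) ℝ ^ (l + 1))) :=
  (Ideal.map_pow _ _ _).symm

theorem truncMaxIdeal_pow_succ (m l : ℕ) : truncMaxIdeal m l ^ (l + 1) = ⊥ := by
  rw [truncMaxIdeal_pow, Ideal.map_quotient_self]
  rfl

theorem annihilator_pow_truncMaxIdeal_general (m l k : ℕ) (hm : 1 ≤ m) :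
    (truncMaxIdeal m l ^ (k + 1)).annihilator = truncMaxIdeal m l ^ (l - k) := by
  refine le_antisymm ?_ (Ideal.pow_le_annihilator_pow (truncMaxIdeal_pow_succ m l) (by omega))
  intro x hx
  obtain ⟨f, rfl⟩ := Ideal.Quotient.mk_surjective x
  let i : Fin m := ⟨0, hm⟩
  have hXi : Ideal.Quotient.mk _ (X i ^ (k + 1)) ∈ truncMaxIdeal m l ^ (k + 1) := by
    rw [truncMaxIdeal_pow]
    exact Ideal.mem_map_of_mem _ (Ideal.pow_mem_pow (Ideal.subset_span (Set.mem_range_self i)) _)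
  have hkill : f * X i ^ (k + 1) ∈ idealOfVars (Fin m) ℝ ^ (l + 1) := by
    rw [← Ideal.Quotient.eq_zero_iff_mem, map_mul]
    exact Submodule.mem_annihilator.mp hx _ hXi
  have hf := mem_pow_idealOfVars_of_mul_X_pow_mem hkill
  rw [Nat.add_sub_add_right] at hf
  rw [truncMaxIdeal_pow]
  exact Ideal.mem_map_of_mem _ hf

/-- For `m ≥ 1` and `l > k ≥ 0`, in `A = ℝ^l_m` one has
`Ann(𝔪_A^{k+1}) = 𝔪_A^{l-k}`. -/
theorem annihilator_pow_truncMaxIdeal (m l k : ℕ) (hm : 1 ≤ m) (hkl : k < l) :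
    (truncMaxIdeal m l ^ (k + 1)).annihilator = truncMaxIdeal m l ^ (l - k) :=
  annihilator_pow_truncMaxIdeal_general m l k hm

end
end
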